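/- arXiv:2410.17718 — 5 statements merged into one kernel-verified Lean document; each statement's English description precedes it below -/
import Mathlib

section
/- Let |Ψ⟩ ∈ ℂ^{d_A} ⊗ ℂ^{d_B} be a unit vector with Schmidt decomposition |Ψ⟩ = Σ_i √λ_i |ψ_A^i⟩⊗|ψ_B^i⟩, let O be a Hermitian d_A×d_A matrix, and let j ≠ k be two indices. Define P_B^{jk} = |ψ_B^j⟩⟨ψ_B^k| ⊗ |ψ_B^k⟩⟨ψ_B^j| + |ψ_B^k⟩⟨ψ_B^j| ⊗ |ψ_B^j⟩⟨ψ_B^k| on ℂ^{d_B}⊗ℂ^{d_B}. Then, identifying (ℂ^{d_A}⊗ℂ^{d_B})⊗(ℂ^{d_A}⊗ℂ^{d_B}) with (ℂ^{d_A}⊗ℂ^{d_A})⊗(ℂ^{d_B}⊗ℂ^{d_B}) via the canonical permutation of tensor factors, Tr[(Ψ ⊗ Ψ)(O ⊗ O ⊗ P_B^{jk})] = 2 λ_j λ_k |⟨ψ_A^j| O |ψ_A^k⟩|². -/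
/-
With `X = |Ψ⟩⟨Ψ|`, the reordering of tensor factors turns `O ⊗ O ⊗ P_B^{jk}` into a sum of two
operators of the form `(O ⊗ R) ⊗ (O ⊗ S)`, and the trace against `X ⊗ X` factors into
`Tr[X (O ⊗ R)] · Tr[X (O ⊗ S)]`. For `R = |ψB u⟩⟨ψB v|`, orthonormality of the `ψB` kills every
cross term of the Schmidt sum: `Tr[X (O ⊗ |ψB u⟩⟨ψB v|)] = √λ_u √λ_v ⟨ψA u|O|ψA v⟩`. Since `O` is
Hermitian, the two factors are complex conjugates, giving `λ_j λ_k |⟨ψA j|O|ψA k⟩|²` twice.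
-/

open Matrix Kronecker

/-- The outer product `|u⟩⟨v|`, with entries `u i * conj (v j)`. -/
noncomputable def outer {m n : Type*} (u : m → ℂ) (v : n → ℂ) : Matrix m n ℂ :=
  Matrix.vecMulVec u (star v)

section Reorder

variable {R l l' m m' n n' p p' : Type*}

lemma trace_reindex_mul [Fintype m] [Fintype n] [NonUnitalNonAssocSemiring R] (e : m ≃ n)
    (A : Matrix m m R) (B : Matrix n n R) :
    (reindex e e A * B).trace = (A * B.submatrix e e).trace := by
  simp only [trace, diag, mul_apply, reindex_apply, submatrix_apply]
  refine (Fintype.sum_equiv e _ _ fun i => ?_).symm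
  exact Fintype.sum_equiv e _ _ fun i' => by simp

lemma kronecker_kronecker_submatrix_prodProdProdComm [CommSemiring R] (A : Matrix l l' R)
    (A' : Matrix m m' R) (B : Matrix n n' R) (B' : Matrix p p' R) :
    ((A ⊗ₖ A') ⊗ₖ (B ⊗ₖ B')).submatrix (Equiv.prodProdProdComm l n m p)
        (Equiv.prodProdProdComm l' n' m' p') = (A ⊗ₖ B) ⊗ₖ (A' ⊗ₖ B') := by
  ext ⟨⟨a, b⟩, ⟨a', b'⟩⟩ ⟨⟨c, d⟩, ⟨c', d'⟩⟩
  simp only [submatrix_apply, Equiv.prodProdProdComm_apply, kroneckerMap_apply]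
  ring

end Reorder

section ProductVectors

variable {R m n p q : Type*}

lemma kronecker_mulVec_prod [Fintype n] [Fintype q] [CommSemiring R] (A : Matrix m n R)
    (B : Matrix p q R) (x : n → R) (y : q → R) :
    (A ⊗ₖ B) *ᵥ (fun i : n × q => x i.1 * y i.2) = fun i => (A *ᵥ x) i.1 * (B *ᵥ y) i.2 := by
  funext i
  simp only [mulVec, dotProduct, kroneckerMap_apply, Fintype.sum_prod_type, Finset.sum_mul_sum]
  exact Finset.sum_congr rfl fun _ _ => Finset.sum_congr rfl fun _ _ => by ring

lemma prod_dotProduct_prod [Fintype n] [Fintype q] [CommSemiring R] (x x' : n → R)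
    (y y' : q → R) :
    (fun i : n × q => x i.1 * y i.2) ⬝ᵥ (fun i => x' i.1 * y' i.2) = (x ⬝ᵥ x') * (y ⬝ᵥ y') := by
  simp only [dotProduct, Fintype.sum_prod_type, Finset.sum_mul_sum]
  exact Finset.sum_congr rfl fun _ _ => Finset.sum_congr rfl fun _ _ => by ring

lemma star_fun_prod_mul [CommSemiring R] [StarRing R] (x : n → R) (y : q → R) :
    star (fun i : n × q => x i.1 * y i.2) = fun i => star x i.1 * star y i.2 := by
  funext i
  simp only [Pi.star_apply, star_mul']

end ProductVectors

lemma trace_outer_mul {n : Type*} [Fintype n] (x y : n → ℂ) (M : Matrix n n ℂ) :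
    (outer x y * M).trace = star y ⬝ᵥ (M *ᵥ x) := by
  rw [outer, vecMulVec_mul, trace_vecMulVec, dotProduct_comm, dotProduct_mulVec]

lemma outer_mulVec {m n : Type*} [Fintype n] (x : m → ℂ) (y z : n → ℂ) :
    outer x y *ᵥ z = (star y ⬝ᵥ z) • x := by
  rw [outer, vecMulVec_mulVec, op_smul_eq_smul]

lemma Matrix.IsHermitian.star_dotProduct_mulVec {R n : Type*} [CommSemiring R] [StarRing R]
    [Fintype n] {O : Matrix n n R} (hO : O.IsHermitian) (x y : n → R) :
    star (star x ⬝ᵥ (O *ᵥ y)) = star y ⬝ᵥ (O *ᵥ x) := by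
  rw [← star_dotProduct_star, star_mulVec, star_star, ← dotProduct_mulVec, hO.eq]

section Schmidt

variable {m n ι : Type*} [Fintype m] [Fintype n] [Fintype ι] [DecidableEq ι]
  (c : ι → ℂ) (a : ι → m → ℂ) {b : ι → n → ℂ}

omit [Fintype m] [Fintype n] [DecidableEq ι] in
lemma schmidt_eq_sum_smul :
    (fun p : m × n => ∑ i, c i * a i p.1 * b i p.2) = ∑ i, c i • fun p => a i p.1 * b i p.2 := by
  funext p
  simp only [Finset.sum_apply, Pi.smul_apply, smul_eq_mul, mul_assoc]

variable (hb : ∀ i j, star (b i) ⬝ᵥ b j = if i = j then 1 else 0)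
include hb

lemma kronecker_outer_mulVec_schmidt (O : Matrix m m ℂ) (u v : ι) :
    (O ⊗ₖ outer (b u) (b v)) *ᵥ (fun p : m × n => ∑ i, c i * a i p.1 * b i p.2) =
      fun p => (c v • O *ᵥ a v) p.1 * b u p.2 := by
  rw [schmidt_eq_sum_smul, mulVec_sum]
  simp only [mulVec_smul, kronecker_mulVec_prod, outer_mulVec, hb, ite_smul, one_smul, zero_smul]
  funext p
  simp only [Finset.sum_apply, Pi.smul_apply, smul_eq_mul, ite_apply, Pi.zero_apply, mul_ite,
    mul_zero, Finset.sum_ite_eq, Finset.mem_univ, if_true, mul_assoc]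

lemma star_schmidt_dotProduct_prod (x : m → ℂ) (u : ι) :
    star (fun p : m × n => ∑ i, c i * a i p.1 * b i p.2) ⬝ᵥ (fun p => x p.1 * b u p.2) =
      star (c u) * (star (a u) ⬝ᵥ x) := by
  rw [schmidt_eq_sum_smul, star_sum, sum_dotProduct]
  simp only [star_smul, star_fun_prod_mul, smul_dotProduct, prod_dotProduct_prod, hb,
    mul_ite, mul_one, mul_zero, smul_eq_mul, Finset.sum_ite_eq', Finset.mem_univ, if_true]

lemma trace_outer_schmidt_mul_kronecker_outer (O : Matrix m m ℂ) (u v : ι) :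
    (outer (fun p : m × n => ∑ i, c i * a i p.1 * b i p.2)
        (fun p : m × n => ∑ i, c i * a i p.1 * b i p.2) * (O ⊗ₖ outer (b u) (b v))).trace =
      star (c u) * c v * (star (a u) ⬝ᵥ (O *ᵥ a v)) := by
  rw [trace_outer_mul, kronecker_outer_mulVec_schmidt c a hb, star_schmidt_dotProduct_prod c a hb,
    dotProduct_smul, smul_eq_mul]
  ring

end Schmidt

theorem fisher_cross_term_via_purification_general {dA dB : ℕ} {ι : Type*} [Fintype ι] [DecidableEq ι]
    (Ψ : Fin dA × Fin dB → ℂ)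
    (lam : ι → ℝ) (ψA : ι → Fin dA → ℂ) (ψB : ι → Fin dB → ℂ)
    (hB : ∀ i j, star (ψB i) ⬝ᵥ ψB j = if i = j then 1 else 0)
    (hlam : ∀ i, 0 ≤ lam i)
    (hΨ : Ψ = fun p => ∑ i, (Real.sqrt (lam i) : ℂ) * ψA i p.1 * ψB i p.2)
    (O : Matrix (Fin dA) (Fin dA) ℂ) (hO : O.IsHermitian)
    (j k : ι) :
    (Matrix.reindex (Equiv.prodProdProdComm (Fin dA) (Fin dB) (Fin dA) (Fin dB))
          (Equiv.prodProdProdComm (Fin dA) (Fin dB) (Fin dA) (Fin dB))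
          (outer Ψ Ψ ⊗ₖ outer Ψ Ψ) *
        ((O ⊗ₖ O) ⊗ₖ
          (outer (ψB j) (ψB k) ⊗ₖ outer (ψB k) (ψB j) +
            outer (ψB k) (ψB j) ⊗ₖ outer (ψB j) (ψB k)))).trace =
      ((2 * lam j * lam k * ‖star (ψA j) ⬝ᵥ (O *ᵥ ψA k)‖ ^ 2 : ℝ) : ℂ) := by
  have trace_factor : ∀ R S : Matrix (Fin dB) (Fin dB) ℂ,
      (outer Ψ Ψ ⊗ₖ outer Ψ Ψ * ((O ⊗ₖ R) ⊗ₖ (O ⊗ₖ S))).trace =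
        (outer Ψ Ψ * (O ⊗ₖ R)).trace * (outer Ψ Ψ * (O ⊗ₖ S)).trace := fun R S => by
    rw [← mul_kronecker_mul, trace_kronecker]
  have expectation : ∀ u v, (outer Ψ Ψ * (O ⊗ₖ outer (ψB u) (ψB v))).trace =
      (Real.sqrt (lam u) : ℂ) * Real.sqrt (lam v) * (star (ψA u) ⬝ᵥ (O *ᵥ ψA v)) := fun u v => by
    rw [hΨ, trace_outer_schmidt_mul_kronecker_outer _ ψA hB, Complex.star_def, Complex.conj_ofReal]
  have sq_sqrt : ∀ i, ((Real.sqrt (lam i) : ℝ) : ℂ) ^ 2 = lam i := fun i => by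
    rw [← Complex.ofReal_pow, Real.sq_sqrt (hlam i)]
  rw [trace_reindex_mul, kronecker_add, submatrix_add, Pi.add_apply, Pi.add_apply,
    kronecker_kronecker_submatrix_prodProdProdComm, kronecker_kronecker_submatrix_prodProdProdComm,
    mul_add, trace_add, trace_factor, trace_factor, expectation, expectation,
    ← hO.star_dotProduct_mulVec (ψA j), Complex.star_def]
  set z := star (ψA j) ⬝ᵥ (O *ᵥ ψA k)
  push_cast
  linear_combination (2 * (Real.sqrt (lam k) : ℂ) ^ 2 * z * starRingEnd ℂ z) * sq_sqrt j +
    (2 * lam j * z * starRingEnd ℂ z) * sq_sqrt k + (2 * lam j * lam k) * Complex.mul_conj' z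

/-- Let `|Ψ⟩ = ∑ i √(λ i) |ψA i⟩ ⊗ |ψB i⟩` be a Schmidt decomposition of a
unit vector, `O` a Hermitian `dA × dA` matrix, and `j ≠ k` two indices.  With
`P_B^{jk} = |ψB j⟩⟨ψB k| ⊗ |ψB k⟩⟨ψB j| + |ψB k⟩⟨ψB j| ⊗ |ψB j⟩⟨ψB k|`, and identifying
`(ℂ^{dA}⊗ℂ^{dB})⊗(ℂ^{dA}⊗ℂ^{dB})` with `(ℂ^{dA}⊗ℂ^{dA})⊗(ℂ^{dB}⊗ℂ^{dB})` by the canonical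
permutation of tensor factors, one has
`Tr[(Ψ ⊗ Ψ)(O ⊗ O ⊗ P_B^{jk})] = 2 λ_j λ_k |⟨ψA j|O|ψA k⟩|²`. -/
theorem fisher_cross_term_via_purification {dA dB : ℕ} {ι : Type*} [Fintype ι] [DecidableEq ι]
    (Ψ : Fin dA × Fin dB → ℂ)
    (lam : ι → ℝ) (ψA : ι → Fin dA → ℂ) (ψB : ι → Fin dB → ℂ)
    (hA : ∀ i j, star (ψA i) ⬝ᵥ ψA j = if i = j then 1 else 0)
    (hB : ∀ i j, star (ψB i) ⬝ᵥ ψB j = if i = j then 1 else 0)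
    (hlam : ∀ i, 0 ≤ lam i) (hsum : ∑ i, lam i = 1)
    (hΨ : Ψ = fun p => ∑ i, (Real.sqrt (lam i) : ℂ) * ψA i p.1 * ψB i p.2)
    (O : Matrix (Fin dA) (Fin dA) ℂ) (hO : O.IsHermitian)
    (j k : ι) (hjk : j ≠ k) :
    (Matrix.reindex (Equiv.prodProdProdComm (Fin dA) (Fin dB) (Fin dA) (Fin dB))
          (Equiv.prodProdProdComm (Fin dA) (Fin dB) (Fin dA) (Fin dB))
          (outer Ψ Ψ ⊗ₖ outer Ψ Ψ) *
        ((O ⊗ₖ O) ⊗ₖ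
          (outer (ψB j) (ψB k) ⊗ₖ outer (ψB k) (ψB j) +
            outer (ψB k) (ψB j) ⊗ₖ outer (ψB j) (ψB k)))).trace =
      ((2 * lam j * lam k * ‖star (ψA j) ⬝ᵥ (O *ᵥ ψA k)‖ ^ 2 : ℝ) : ℂ) :=
  fisher_cross_term_via_purification_general Ψ lam ψA ψB hB hlam hΨ O hO j k
end

section
/- Let ρ be a d×d density matrix (positive semidefinite with trace 1), let t ≥ 1 be an integer, and let c be a Hermitian d×d matrix with ‖c‖_tr ≤ ε and ‖c‖_∞ ≤ ε for some ε ≥ 0. Then ‖(ρ+c)^t − ρ^t‖_tr ≤ (1+ε)^t − 1. In particular, if ε·t ≤ 1 then |Tr((ρ+c)^t) − Tr(ρ^t)| ≤ 2εt. -/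
open Matrix
open scoped ComplexOrder

/-- The singular values of a square complex matrix: square roots of the eigenvalues of `Mᴴ M`. -/
noncomputable def singularValues {d : ℕ} (M : Matrix (Fin d) (Fin d) ℂ) : Fin d → ℝ :=
  fun i => Real.sqrt ((Matrix.isHermitian_conjTranspose_mul_self M).eigenvalues i)

/-- The trace norm (sum of singular values) of a square complex matrix. -/
noncomputable def traceNorm {d : ℕ} (M : Matrix (Fin d) (Fin d) ℂ) : ℝ :=
  ∑ i, singularValues M i

/-- The operator norm (largest singular value) of a square complex matrix. -/
noncomputable def opNorm {d : ℕ} (M : Matrix (Fin d) (Fin d) ℂ) : ℝ :=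
  ⨆ i, singularValues M i

/-!
The trace norm is dual to the `ℓ²` operator norm `‖·‖`: if `vⱼ` are the right singular vectors
of `M`, then `tr (X M) = ∑ⱼ ⟪vⱼ, X M vⱼ⟫` gives `|tr (X M)| ≤ ‖X‖ ∑ⱼ ‖M vⱼ‖ = ‖X‖ ‖M‖_tr`, and
the partial isometry `U = ∑ⱼ vⱼ uⱼᴴ`, with `uⱼ = M vⱼ / ‖M vⱼ‖`, attains `tr (U M) = ‖M‖_tr`.
Hence `‖M‖_tr = max_{‖U‖ ≤ 1} Re tr (U M)`, which gives the triangle inequality and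
`‖X M‖_tr, ‖M X‖_tr ≤ ‖X‖ ‖M‖_tr`. A density matrix has `‖ρ‖ ≤ 1` (its eigenvalues lie in
`[0, 1]`), so from `(ρ + c)^(k+1) - ρ^(k+1) = ((ρ + c)^k - ρ^k) ρ + (ρ + c)^k c` the trace norms
`aₖ` of the differences satisfy `aₖ₊₁ ≤ aₖ + (1 + ε)^k ε`, i.e. `aₖ ≤ (1 + ε)^k - 1`. Finally
`|tr D| ≤ ‖D‖_tr` and `(1 + ε)^t ≤ exp (ε t) ≤ 1 + 2 ε t` when `ε t ≤ 1`.
-/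

open scoped InnerProductSpace Matrix.Norms.L2Operator MatrixOrder

namespace Matrix

variable {n : Type*} [Fintype n] [DecidableEq n]

theorem PosSemidef.norm_le_of_eigenvalues_le {H : Matrix n n ℂ} (hH : H.PosSemidef)
    {r : ℝ} (hr : 0 ≤ r) (h : ∀ i, hH.1.eigenvalues i ≤ r) : ‖H‖ ≤ r := by
  rw [CStarAlgebra.norm_le_iff_le_algebraMap H hr hH.nonneg,
    le_algebraMap_iff_spectrum_le hH.1.isSelfAdjoint, hH.1.spectrum_real_eq_range_eigenvalues]
  rintro _ ⟨i, rfl⟩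
  exact h i

theorem PosSemidef.norm_le_one_of_trace_eq_one {ρ : Matrix n n ℂ} (hρ : ρ.PosSemidef)
    (htr : ρ.trace = 1) : ‖ρ‖ ≤ 1 := by
  have hsum : ∑ i, hρ.1.eigenvalues i = 1 := by
    simpa [htr] using congrArg RCLike.re hρ.1.trace_eq_sum_eigenvalues.symm
  refine hρ.norm_le_of_eigenvalues_le zero_le_one fun i => hsum ▸ ?_
  exact Finset.single_le_sum (fun j _ => hρ.eigenvalues_nonneg j) (Finset.mem_univ i)

theorem l2_opNorm_one_le : ‖(1 : Matrix n n ℂ)‖ ≤ 1 := by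
  rw [cstar_norm_def, map_one]
  exact ContinuousLinearMap.norm_id_le

theorem l2_opNorm_pow_le (A : Matrix n n ℂ) : ∀ k : ℕ, ‖A ^ k‖ ≤ ‖A‖ ^ k
  | 0 => by simpa using l2_opNorm_one_le
  | k + 1 => norm_pow_le' A k.succ_pos

theorem trace_eq_sum_inner {ι : Type*} [Fintype ι] (M : Matrix n n ℂ)
    (b : OrthonormalBasis ι ℂ (EuclideanSpace ℂ n)) :
    M.trace = ∑ i, ⟪b i, toEuclideanLin M (b i)⟫_ℂ := by
  rw [← LinearMap.trace_eq_sum_inner, toEuclideanLin_eq_toLin_orthonormal,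
    LinearMap.trace_eq_matrix_trace ℂ (EuclideanSpace.basisFun n ℂ).toBasis,
    LinearMap.toMatrix_toLin]

theorem l2_opNorm_toEuclideanLin_le (M : Matrix n n ℂ) (x : EuclideanSpace ℂ n) :
    ‖toEuclideanLin M x‖ ≤ ‖M‖ * ‖x‖ :=
  (toEuclideanCLM (n := n) (𝕜 := ℂ) M).le_opNorm x

theorem toEuclideanLin_mul_apply (A B : Matrix n n ℂ) (x : EuclideanSpace ℂ n) :
    toEuclideanLin (A * B) x = toEuclideanLin A (toEuclideanLin B x) := by
  simp

noncomputable def rightSingularBasis (M : Matrix n n ℂ) :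
    OrthonormalBasis n ℂ (EuclideanSpace ℂ n) :=
  (isHermitian_conjTranspose_mul_self M).eigenvectorBasis

theorem inner_toEuclideanLin_rightSingularBasis (M : Matrix n n ℂ) (i j : n) :
    ⟪toEuclideanLin M (rightSingularBasis M i), toEuclideanLin M (rightSingularBasis M j)⟫_ℂ =
      (isHermitian_conjTranspose_mul_self M).eigenvalues j *
        ⟪rightSingularBasis M i, rightSingularBasis M j⟫_ℂ := by
  set hH := isHermitian_conjTranspose_mul_self M
  have hv : toEuclideanLin (Mᴴ * M) (rightSingularBasis M j) =
      (hH.eigenvalues j : ℂ) • rightSingularBasis M j := by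
    apply (WithLp.equiv 2 _).injective
    simpa [rightSingularBasis] using hH.mulVec_eigenvectorBasis j
  rw [← LinearMap.adjoint_inner_right, ← toEuclideanLin_conjTranspose_eq_adjoint,
    ← toEuclideanLin_mul_apply, hv, inner_smul_right]

theorem inner_toEuclideanLin_rightSingularBasis_of_ne (M : Matrix n n ℂ) {i j : n}
    (h : i ≠ j) :
    ⟪toEuclideanLin M (rightSingularBasis M i), toEuclideanLin M (rightSingularBasis M j)⟫_ℂ =
      0 := by
  rw [inner_toEuclideanLin_rightSingularBasis,
    orthonormal_iff_ite.mp (rightSingularBasis M).orthonormal, if_neg h, mul_zero]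

theorem norm_trace_mul_le (X M : Matrix n n ℂ) :
    ‖(X * M).trace‖ ≤ ‖X‖ * ∑ j, ‖toEuclideanLin M (rightSingularBasis M j)‖ := by
  rw [trace_eq_sum_inner _ (rightSingularBasis M), Finset.mul_sum]
  refine (norm_sum_le _ _).trans (Finset.sum_le_sum fun j _ => ?_)
  calc ‖⟪rightSingularBasis M j, toEuclideanLin (X * M) (rightSingularBasis M j)⟫_ℂ‖
      ≤ ‖toEuclideanLin X (toEuclideanLin M (rightSingularBasis M j))‖ := by
        simpa [toEuclideanLin_mul_apply] using
          norm_inner_le_norm (𝕜 := ℂ) (rightSingularBasis M j) _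
    _ ≤ _ := l2_opNorm_toEuclideanLin_le _ _

/-- Zero when `M vⱼ = 0`, since `0⁻¹ = 0`. -/
noncomputable def leftSingularVector (M : Matrix n n ℂ) (j : n) : EuclideanSpace ℂ n :=
  (‖toEuclideanLin M (rightSingularBasis M j)‖ : ℂ)⁻¹ • toEuclideanLin M (rightSingularBasis M j)

theorem inner_leftSingularVector_toEuclideanLin (M : Matrix n n ℂ) (i j : n) :
    ⟪leftSingularVector M i, toEuclideanLin M (rightSingularBasis M j)⟫_ℂ =
      if i = j then (‖toEuclideanLin M (rightSingularBasis M j)‖ : ℂ) else 0 := by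
  rw [leftSingularVector, inner_smul_left, map_inv₀, Complex.conj_ofReal]
  split_ifs with h
  · subst h
    rw [inner_self_eq_norm_sq_to_K]
    simpa [sq, mul_assoc] using inv_mul_mul_self (‖toEuclideanLin M (rightSingularBasis M i)‖ : ℂ)
  · rw [inner_toEuclideanLin_rightSingularBasis_of_ne M h, mul_zero]

theorem orthonormal_leftSingularVector (M : Matrix n n ℂ) :
    Orthonormal ℂ fun j : {j // toEuclideanLin M (rightSingularBasis M j) ≠ 0} =>
      leftSingularVector M j := by
  rw [orthonormal_iff_ite]
  rintro i ⟨j, hj⟩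
  nth_rw 2 [leftSingularVector]
  rw [inner_smul_right, inner_leftSingularVector_toEuclideanLin]
  simp [Subtype.ext_iff, hj]

theorem sum_norm_inner_leftSingularVector_sq_le (M : Matrix n n ℂ) (x : EuclideanSpace ℂ n) :
    ∑ j, ‖⟪leftSingularVector M j, x⟫_ℂ‖ ^ 2 ≤ ‖x‖ ^ 2 := by
  classical
  calc ∑ j, ‖⟪leftSingularVector M j, x⟫_ℂ‖ ^ 2
      = ∑ j with toEuclideanLin M (rightSingularBasis M j) ≠ 0,
          ‖⟪leftSingularVector M j, x⟫_ℂ‖ ^ 2 := by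
        refine (Finset.sum_filter_of_ne fun j _ hj => ?_).symm
        contrapose! hj
        simp [leftSingularVector, hj]
    _ = ∑ j : {j // toEuclideanLin M (rightSingularBasis M j) ≠ 0},
          ‖⟪leftSingularVector M j, x⟫_ℂ‖ ^ 2 := Finset.sum_subtype _ (by simp) _
    _ ≤ ‖x‖ ^ 2 := (orthonormal_leftSingularVector M).sum_inner_products_le x

theorem exists_norm_le_one_trace_mul_eq (M : Matrix n n ℂ) :
    ∃ U : Matrix n n ℂ, ‖U‖ ≤ 1 ∧
      (U * M).trace = ∑ j, (‖toEuclideanLin M (rightSingularBasis M j)‖ : ℂ) := by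
  set v := rightSingularBasis M
  set L : EuclideanSpace ℂ n →L[ℂ] EuclideanSpace ℂ n :=
    ∑ j, InnerProductSpace.rankOne ℂ (v j) (leftSingularVector M j)
  set U := (toEuclideanCLM (n := n) (𝕜 := ℂ)).symm L
  have hU : ∀ x, toEuclideanLin U x = L x := fun x => by
    rw [← coe_toEuclideanCLM_eq_toEuclideanLin, StarAlgEquiv.apply_symm_apply]
    rfl
  have hL : ∀ x i, ⟪v i, L x⟫_ℂ = ⟪leftSingularVector M i, x⟫_ℂ := fun x i => by
    simp only [L, _root_.sum_apply, InnerProductSpace.rankOne_apply]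
    exact v.orthonormal.inner_right_fintype _ i
  refine ⟨U, ?_, ?_⟩
  · rw [cstar_norm_def, StarAlgEquiv.apply_symm_apply]
    refine L.opNorm_le_bound zero_le_one fun x => ?_
    rw [one_mul, ← sq_le_sq₀ (norm_nonneg _) (norm_nonneg _), ← v.sum_sq_norm_inner_right]
    simpa only [hL] using sum_norm_inner_leftSingularVector_sq_le M x
  · rw [trace_eq_sum_inner _ v]
    refine Finset.sum_congr rfl fun j _ => ?_
    rw [toEuclideanLin_mul_apply, hU, hL, inner_leftSingularVector_toEuclideanLin, if_pos rfl]

end Matrix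

section
variable {d : ℕ}

theorem singularValues_eq_norm (M : Matrix (Fin d) (Fin d) ℂ) (j : Fin d) :
    singularValues M j = ‖toEuclideanLin M (rightSingularBasis M j)‖ := by
  rw [singularValues, ← Real.sqrt_sq (norm_nonneg _), ← inner_self_eq_norm_sq (𝕜 := ℂ),
    inner_toEuclideanLin_rightSingularBasis, inner_self_eq_norm_sq_to_K,
    (rightSingularBasis M).orthonormal.norm_eq_one]
  simp

theorem singularValues_nonneg (M : Matrix (Fin d) (Fin d) ℂ) (j : Fin d) :
    0 ≤ singularValues M j :=
  Real.sqrt_nonneg _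

theorem traceNorm_nonneg (M : Matrix (Fin d) (Fin d) ℂ) : 0 ≤ traceNorm M :=
  Finset.sum_nonneg fun j _ => singularValues_nonneg M j

theorem opNorm_eq_norm (M : Matrix (Fin d) (Fin d) ℂ) : opNorm M = ‖M‖ := by
  refine le_antisymm (Real.iSup_le (fun j => ?_) (norm_nonneg M)) ?_
  · rw [singularValues_eq_norm]
    exact (l2_opNorm_toEuclideanLin_le M _).trans_eq
      (by rw [(rightSingularBasis M).orthonormal.norm_eq_one, mul_one])
  · have hop : 0 ≤ opNorm M := Real.iSup_nonneg (singularValues_nonneg M)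
    have hsq : ‖Mᴴ * M‖ ≤ opNorm M ^ 2 := by
      refine (posSemidef_conjTranspose_mul_self M).norm_le_of_eigenvalues_le (sq_nonneg _)
        fun j => ?_
      rw [← Real.sq_sqrt (eigenvalues_conjTranspose_mul_self_nonneg M j)]
      exact pow_le_pow_left₀ (Real.sqrt_nonneg _)
        (le_ciSup (Set.finite_range (singularValues M)).bddAbove j) 2
    rw [l2_opNorm_conjTranspose_mul_self, ← sq] at hsq
    exact (pow_le_pow_iff_left₀ (norm_nonneg M) hop two_ne_zero).mp hsq

theorem traceNorm_eq_sum_norm (M : Matrix (Fin d) (Fin d) ℂ) :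
    traceNorm M = ∑ j, ‖toEuclideanLin M (rightSingularBasis M j)‖ :=
  Finset.sum_congr rfl fun j _ => singularValues_eq_norm M j

theorem norm_trace_mul_le_traceNorm (X M : Matrix (Fin d) (Fin d) ℂ) :
    ‖(X * M).trace‖ ≤ ‖X‖ * traceNorm M :=
  traceNorm_eq_sum_norm M ▸ norm_trace_mul_le X M

theorem norm_trace_le_traceNorm (M : Matrix (Fin d) (Fin d) ℂ) : ‖M.trace‖ ≤ traceNorm M := by
  simpa using (norm_trace_mul_le_traceNorm 1 M).trans
    (mul_le_of_le_one_left (traceNorm_nonneg M) l2_opNorm_one_le)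

theorem traceNorm_le_of_forall_re_trace_mul_le {M : Matrix (Fin d) (Fin d) ℂ} {a : ℝ}
    (h : ∀ U : Matrix (Fin d) (Fin d) ℂ, ‖U‖ ≤ 1 → (U * M).trace.re ≤ a) : traceNorm M ≤ a := by
  obtain ⟨U, hU, htr⟩ := exists_norm_le_one_trace_mul_eq M
  have := h U hU
  rwa [htr, ← Complex.ofReal_sum, Complex.ofReal_re, ← traceNorm_eq_sum_norm] at this

theorem re_trace_mul_le_traceNorm {U : Matrix (Fin d) (Fin d) ℂ} (hU : ‖U‖ ≤ 1)
    (M : Matrix (Fin d) (Fin d) ℂ) : (U * M).trace.re ≤ traceNorm M :=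
  (Complex.re_le_norm _).trans <| (norm_trace_mul_le_traceNorm U M).trans <|
    mul_le_of_le_one_left (traceNorm_nonneg M) hU

theorem traceNorm_zero : traceNorm (0 : Matrix (Fin d) (Fin d) ℂ) = 0 :=
  le_antisymm (traceNorm_le_of_forall_re_trace_mul_le fun U _ => by simp) (traceNorm_nonneg 0)

theorem traceNorm_add_le (A B : Matrix (Fin d) (Fin d) ℂ) :
    traceNorm (A + B) ≤ traceNorm A + traceNorm B :=
  traceNorm_le_of_forall_re_trace_mul_le fun U hU => by
    rw [Matrix.mul_add, trace_add, Complex.add_re]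
    exact add_le_add (re_trace_mul_le_traceNorm hU A) (re_trace_mul_le_traceNorm hU B)

theorem traceNorm_mul_le_left (X M : Matrix (Fin d) (Fin d) ℂ) :
    traceNorm (X * M) ≤ ‖X‖ * traceNorm M :=
  traceNorm_le_of_forall_re_trace_mul_le fun U hU => by
    rw [← Matrix.mul_assoc]
    exact (Complex.re_le_norm _).trans <| (norm_trace_mul_le_traceNorm _ M).trans <|
      mul_le_mul_of_nonneg_right
        ((norm_mul_le U X).trans (mul_le_of_le_one_left (norm_nonneg X) hU)) (traceNorm_nonneg M)

theorem traceNorm_mul_le_right (M X : Matrix (Fin d) (Fin d) ℂ) :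
    traceNorm (M * X) ≤ traceNorm M * ‖X‖ :=
  traceNorm_le_of_forall_re_trace_mul_le fun U hU => by
    rw [← Matrix.mul_assoc, trace_mul_cycle, mul_comm (traceNorm M)]
    exact (Complex.re_le_norm _).trans <| (norm_trace_mul_le_traceNorm _ M).trans <|
      mul_le_mul_of_nonneg_right
        ((norm_mul_le X U).trans (mul_le_of_le_one_right (norm_nonneg X) hU)) (traceNorm_nonneg M)

theorem traceNorm_add_pow_sub_pow_le {A C : Matrix (Fin d) (Fin d) ℂ} {a ε : ℝ} (hA : ‖A‖ ≤ a)
    (hCop : ‖C‖ ≤ ε) (hCtr : traceNorm C ≤ ε) (k : ℕ) :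
    traceNorm ((A + C) ^ k - A ^ k) ≤ (a + ε) ^ k - a ^ k := by
  induction k with
  | zero => simp [traceNorm_zero]
  | succ k ih =>
    have hpow : ‖(A + C) ^ k‖ ≤ (a + ε) ^ k :=
      (l2_opNorm_pow_le _ k).trans <|
        pow_le_pow_left₀ (norm_nonneg _) ((norm_add_le A C).trans (add_le_add hA hCop)) k
    have hsplit : (A + C) ^ (k + 1) - A ^ (k + 1) =
        ((A + C) ^ k - A ^ k) * A + (A + C) ^ k * C := by
      rw [pow_succ, pow_succ]
      noncomm_ring
    calc traceNorm ((A + C) ^ (k + 1) - A ^ (k + 1))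
        ≤ traceNorm ((A + C) ^ k - A ^ k) * ‖A‖ + ‖(A + C) ^ k‖ * traceNorm C := by
          rw [hsplit]
          exact (traceNorm_add_le _ _).trans
            (add_le_add (traceNorm_mul_le_right _ _) (traceNorm_mul_le_left _ _))
      _ ≤ ((a + ε) ^ k - a ^ k) * a + (a + ε) ^ k * ε :=
          add_le_add (mul_le_mul ih hA (norm_nonneg A) ((traceNorm_nonneg _).trans ih))
            (mul_le_mul hpow hCtr (traceNorm_nonneg C) ((norm_nonneg _).trans hpow))
      _ = (a + ε) ^ (k + 1) - a ^ (k + 1) := by ring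

end

theorem one_add_pow_sub_one_le {ε : ℝ} (hε : 0 ≤ ε) {t : ℕ} (h : ε * t ≤ 1) :
    (1 + ε) ^ t - 1 ≤ 2 * ε * t := by
  have hx : 0 ≤ ε * t := by positivity
  have hexp : (1 + ε) ^ t ≤ Real.exp (ε * t) := by
    rw [mul_comm, Real.exp_nat_mul]
    exact pow_le_pow_left₀ (by linarith) (by linarith [Real.add_one_le_exp ε]) t
  -- `exp` lies below its chord on `[0, 1]`, and `e - 1 < 2`
  have hconv := convexOn_exp.2 (Set.mem_univ 0) (Set.mem_univ 1) (sub_nonneg.2 h) hx (by ring)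
  simp only [smul_eq_mul, mul_zero, zero_add, mul_one, Real.exp_zero] at hconv
  nlinarith [Real.exp_one_lt_d9]

theorem moment_perturbation_bound_general {d : ℕ} (ρ c : Matrix (Fin d) (Fin d) ℂ)
    (hρ : ρ.PosSemidef) (hρtr : ρ.trace = 1)
    (ε : ℝ)
    (hctr : traceNorm c ≤ ε) (hcop : opNorm c ≤ ε)
    (t : ℕ) :
    traceNorm ((ρ + c) ^ t - ρ ^ t) ≤ (1 + ε) ^ t - 1 ∧
    (ε * t ≤ 1 →
      ‖((ρ + c) ^ t).trace - (ρ ^ t).trace‖ ≤ 2 * ε * t) := by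
  have hε : 0 ≤ ε := (traceNorm_nonneg c).trans hctr
  have hbound := traceNorm_add_pow_sub_pow_le (hρ.norm_le_one_of_trace_eq_one hρtr)
    (opNorm_eq_norm c ▸ hcop) hctr t
  rw [one_pow] at hbound
  refine ⟨hbound, fun hεt => ?_⟩
  calc ‖((ρ + c) ^ t).trace - (ρ ^ t).trace‖ = ‖((ρ + c) ^ t - ρ ^ t).trace‖ := by
        rw [trace_sub]
    _ ≤ traceNorm ((ρ + c) ^ t - ρ ^ t) := norm_trace_le_traceNorm _
    _ ≤ (1 + ε) ^ t - 1 := hbound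
    _ ≤ 2 * ε * t := one_add_pow_sub_one_le hε hεt

/-- Let `ρ` be a `d × d` density matrix, `t ≥ 1` an integer, and `c` a
Hermitian matrix with `‖c‖_tr ≤ ε` and `‖c‖_∞ ≤ ε` for some `ε ≥ 0`.  Then
`‖(ρ+c)^t − ρ^t‖_tr ≤ (1+ε)^t − 1`; in particular, if `ε·t ≤ 1` then
`|Tr((ρ+c)^t) − Tr(ρ^t)| ≤ 2εt`. -/
theorem moment_perturbation_bound {d : ℕ} (ρ c : Matrix (Fin d) (Fin d) ℂ)
    (hρ : ρ.PosSemidef) (hρtr : ρ.trace = 1)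
    (hc : c.IsHermitian) (ε : ℝ) (hε : 0 ≤ ε)
    (hctr : traceNorm c ≤ ε) (hcop : opNorm c ≤ ε)
    (t : ℕ) (ht : 1 ≤ t) :
    traceNorm ((ρ + c) ^ t - ρ ^ t) ≤ (1 + ε) ^ t - 1 ∧
    (ε * t ≤ 1 →
      ‖((ρ + c) ^ t).trace - (ρ ^ t).trace‖ ≤ 2 * ε * t) :=
  moment_perturbation_bound_general ρ c hρ hρtr ε hctr hcop t
end

section
/- Let M be a d×d positive semidefinite Hermitian matrix whose largest eigenvalue λ exceeds its second-largest eigenvalue (with multiplicity) by at least Δ > 0. Let M′ be a Hermitian d×d matrix with ‖M − M′‖_tr ≤ ε, where ε ≤ Δ/2, and let λ′ be the largest eigenvalue of M′. Then |λ − λ′| ≤ ε. Moreover, if |ψ⟩ and |ψ′⟩ are unit eigenvectors of M and M′ for the eigenvalues λ and λ′ respectively, then ‖|ψ⟩⟨ψ| − |ψ′⟩⟨ψ′|‖_tr ≤ 2√(2ε/Δ). -/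
open Matrix
open scoped ComplexOrder

/-!
For a unit vector `x`, the real part of `x* A x` is the average of the eigenvalues of `A` with
weights `|⟨vᵢ, x⟩|²`, so it is at most the top eigenvalue and differs from `x* A' x` by at most
`‖A - A'‖_tr = ∑ |eigenvalues of A - A'|`. Testing at `ψ` and `ψ'` gives `|λ - λ'| ≤ ε`. The gap
gives `ψ'* M ψ' ≤ λ - Δ (1 - |⟨ψ, ψ'⟩|²)`, while `ψ'* M ψ' ≥ λ' - ε ≥ λ - 2ε`; hence
`1 - |⟨ψ, ψ'⟩|² ≤ 2ε/Δ`. Finally `B = |ψ⟩⟨ψ| - |ψ'⟩⟨ψ'|` satisfies `B³ = (1 - |⟨ψ, ψ'⟩|²) B` and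
`tr B² = 2 (1 - |⟨ψ, ψ'⟩|²)`, so its nonzero eigenvalues are `±√(1 - |⟨ψ, ψ'⟩|²)`, one of each,
and `‖B‖_tr = 2 √(1 - |⟨ψ, ψ'⟩|²)`.
-/

lemma abs_mul_sqrt_eq_sq_of_pow_three_eq_mul {ν r : ℝ} (h : ν ^ 3 = r * ν) :
    |ν| * √r = ν ^ 2 := by
  rcases eq_or_ne ν 0 with rfl | hν
  · simp
  have hr : ν ^ 2 = r := mul_right_cancel₀ hν (by linear_combination h)
  rw [← hr, Real.sqrt_sq_eq_abs, ← sq, sq_abs]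

namespace Matrix.IsHermitian

variable {𝕜 n : Type*} [RCLike 𝕜] [Fintype n] [DecidableEq n] {A B : Matrix n n 𝕜}

lemma sum_eigenvalues_cfc (hA : A.IsHermitian) (hB : B.IsHermitian) {f : ℝ → ℝ}
    (hBA : B = cfc f A) (g : ℝ → ℝ) :
    ∑ i, g (hB.eigenvalues i) = ∑ i, g (f (hA.eigenvalues i)) := by
  have hroots :
      B.charpoly.roots = Multiset.map (fun i => (f (hA.eigenvalues i) : 𝕜)) Finset.univ.val := by
    rw [hBA, hA.charpoly_cfc_eq f, Polynomial.roots_prod _ _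
      (Finset.prod_ne_zero_iff.mpr fun i _ => Polynomial.X_sub_C_ne_zero _)]
    simp
  rw [hB.roots_charpoly_eq_eigenvalues] at hroots
  simpa [Multiset.map_map, Function.comp_def] using
    congrArg (fun s => (s.map (g ∘ RCLike.re)).sum) hroots

lemma eigenvalues_pow_three_eq_mul_of_pow_three_eq_smul (hB : B.IsHermitian) {r : ℝ}
    (h3 : B ^ 3 = r • B) (i : n) :
    hB.eigenvalues i ^ 3 = r * hB.eigenvalues i := by
  have hcfc : cfc (· ^ 3 : ℝ → ℝ) B = cfc (r * ·) B := by
    rw [cfc_pow_id B 3 hB.isSelfAdjoint, cfc_const_mul_id r B hB.isSelfAdjoint, h3]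
  exact (eqOn_of_cfc_eq_cfc hcfc (ha := hB.isSelfAdjoint)) (hB.eigenvalues_mem_spectrum_real i)

lemma sum_abs_eigenvalues_of_pow_three_eq_smul (hB : B.IsHermitian) {r k : ℝ}
    (h3 : B ^ 3 = r • B) (h2 : (B ^ 2).trace = ((k * r : ℝ) : 𝕜)) :
    ∑ i, |hB.eigenvalues i| = k * √r := by
  have hBB : (B ^ 2).IsHermitian := hB.pow 2
  have hsq : ∑ i, hB.eigenvalues i ^ 2 = k * r := by
    have hcfc : B ^ 2 = cfc (· ^ 2 : ℝ → ℝ) B := (cfc_pow_id B 2 hB.isSelfAdjoint).symm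
    have htr := hBB.trace_eq_sum_eigenvalues
    rw [h2, ← RCLike.ofReal_sum] at htr
    rw [← hB.sum_eigenvalues_cfc hBB hcfc (fun x => x)]
    exact_mod_cast htr.symm
  have habs : ∀ i, |hB.eigenvalues i| * √r = hB.eigenvalues i ^ 2 := fun i =>
    abs_mul_sqrt_eq_sq_of_pow_three_eq_mul
      (hB.eigenvalues_pow_three_eq_mul_of_pow_three_eq_smul h3 i)
  rcases eq_or_ne (√r) 0 with h0 | h0
  · have hz : ∀ i, hB.eigenvalues i = 0 := fun i => by simpa [h0] using (habs i).symm
    simp [hz, h0]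
  · apply mul_right_cancel₀ h0
    rw [Finset.sum_mul, Finset.sum_congr rfl fun i _ => habs i, hsq, mul_assoc,
      Real.mul_self_sqrt (Real.sqrt_ne_zero'.mp h0).le]

end Matrix.IsHermitian

lemma traceNorm_eq_sum_abs_eigenvalues {d : ℕ} {A : Matrix (Fin d) (Fin d) ℂ}
    (hA : A.IsHermitian) : traceNorm A = ∑ i, |hA.eigenvalues i| := by
  unfold traceNorm singularValues
  have hsq : Aᴴ * A = cfc (· ^ 2 : ℝ → ℝ) A := by
    rw [cfc_pow_id A 2 hA.isSelfAdjoint, hA.eq, sq]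
  simpa only [Real.sqrt_sq_eq_abs] using
    hA.sum_eigenvalues_cfc (isHermitian_conjTranspose_mul_self A) hsq Real.sqrt

namespace Matrix

variable {n : Type*} [Fintype n] [DecidableEq n]

lemma star_dotProduct_unitary_conj_mulVec (U : unitaryGroup n ℂ) (B : Matrix n n ℂ)
    (x z : n → ℂ) :
    star x ⬝ᵥ (((U : Matrix n n ℂ) * B * star (U : Matrix n n ℂ)) *ᵥ z) =
      star (star (U : Matrix n n ℂ) *ᵥ x) ⬝ᵥ (B *ᵥ (star (U : Matrix n n ℂ) *ᵥ z)) := by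
  rw [← mulVec_mulVec, ← mulVec_mulVec, dotProduct_mulVec, star_mulVec, star_eq_conjTranspose,
    conjTranspose_conjTranspose]

lemma star_dotProduct_star_unitary_mulVec (U : unitaryGroup n ℂ) (x z : n → ℂ) :
    star (star (U : Matrix n n ℂ) *ᵥ x) ⬝ᵥ (star (U : Matrix n n ℂ) *ᵥ z) = star x ⬝ᵥ z := by
  simpa [Unitary.mul_star_self_of_mem U.2] using (star_dotProduct_unitary_conj_mulVec U 1 x z).symm

lemma re_star_dotProduct_diagonal_mulVec (w : n → ℝ) (y : n → ℂ) :
    (star y ⬝ᵥ (diagonal (fun i => (w i : ℂ)) *ᵥ y)).re = ∑ i, w i * Complex.normSq (y i) := by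
  simp only [mulVec_diagonal, dotProduct, Pi.star_apply, Complex.re_sum]
  refine Finset.sum_congr rfl fun i _ => ?_
  rw [Complex.star_def, mul_left_comm, Complex.conj_mul', Complex.normSq_eq_norm_sq]
  norm_cast

namespace IsHermitian

variable {A : Matrix n n ℂ} (hA : A.IsHermitian)

/-- The weight `|⟨vᵢ, x⟩|²` of `x` on the `i`-th eigenvector `vᵢ` of `A`. -/
noncomputable def spectralWeight (x : n → ℂ) (i : n) : ℝ :=
  Complex.normSq ((star (hA.eigenvectorUnitary : Matrix n n ℂ) *ᵥ x) i)

lemma spectralWeight_nonneg (x : n → ℂ) (i : n) : 0 ≤ hA.spectralWeight x i :=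
  Complex.normSq_nonneg _

lemma sum_spectralWeight (x : n → ℂ) : ∑ i, hA.spectralWeight x i = (star x ⬝ᵥ x).re := by
  simpa [star_dotProduct_star_unitary_mulVec, spectralWeight] using
    (re_star_dotProduct_diagonal_mulVec 1 (star (hA.eigenvectorUnitary : Matrix n n ℂ) *ᵥ x)).symm

lemma sum_spectralWeight_eq_one {x : n → ℂ} (hx : star x ⬝ᵥ x = 1) :
    ∑ i, hA.spectralWeight x i = 1 := by
  rw [sum_spectralWeight, hx, Complex.one_re]

lemma re_star_dotProduct_mulVec (x : n → ℂ) :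
    (star x ⬝ᵥ (A *ᵥ x)).re = ∑ i, hA.eigenvalues i * hA.spectralWeight x i := by
  conv_lhs => rw [hA.spectral_theorem, Unitary.conjStarAlgAut_apply]
  rw [star_dotProduct_unitary_conj_mulVec]
  exact re_star_dotProduct_diagonal_mulVec _ _

lemma re_star_dotProduct_mulVec_le {x : n → ℂ} (hx : star x ⬝ᵥ x = 1) {c : ℝ}
    (hc : ∀ i, hA.eigenvalues i ≤ c) : (star x ⬝ᵥ (A *ᵥ x)).re ≤ c := by
  calc (star x ⬝ᵥ (A *ᵥ x)).re = ∑ i, hA.eigenvalues i * hA.spectralWeight x i :=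
        hA.re_star_dotProduct_mulVec x
    _ ≤ ∑ i, c * hA.spectralWeight x i :=
        Finset.sum_le_sum fun i _ =>
          mul_le_mul_of_nonneg_right (hc i) (hA.spectralWeight_nonneg x i)
    _ = c := by rw [← Finset.mul_sum, hA.sum_spectralWeight_eq_one hx, mul_one]

lemma abs_re_star_dotProduct_mulVec_le {x : n → ℂ} (hx : star x ⬝ᵥ x = 1) :
    |(star x ⬝ᵥ (A *ᵥ x)).re| ≤ ∑ i, |hA.eigenvalues i| := by
  have hw_le : ∀ i, hA.spectralWeight x i ≤ 1 := fun i => hA.sum_spectralWeight_eq_one hx ▸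
    Finset.single_le_sum (fun j _ => hA.spectralWeight_nonneg x j) (Finset.mem_univ i)
  rw [hA.re_star_dotProduct_mulVec]
  refine (Finset.abs_sum_le_sum_abs _ _).trans (Finset.sum_le_sum fun i _ => ?_)
  rw [abs_mul, abs_of_nonneg (hA.spectralWeight_nonneg x i)]
  exact mul_le_of_le_one_right (abs_nonneg _) (hw_le i)

lemma star_eigenvectorUnitary_mulVec_apply_eq_zero {ψ : n → ℂ} {μ : ℝ}
    (hψ : A *ᵥ ψ = (μ : ℂ) • ψ) {j : n} (hj : hA.eigenvalues j ≠ μ) :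
    (star (hA.eigenvectorUnitary : Matrix n n ℂ) *ᵥ ψ) j = 0 := by
  set U : Matrix n n ℂ := (hA.eigenvectorUnitary : Matrix n n ℂ)
  have hUA : star U * A = diagonal (fun i => (hA.eigenvalues i : ℂ)) * star U := by
    conv_lhs => rw [hA.spectral_theorem, Unitary.conjStarAlgAut_apply]
    rw [← Matrix.mul_assoc, ← Matrix.mul_assoc,
      Unitary.star_mul_self_of_mem hA.eigenvectorUnitary.2, Matrix.one_mul]
    rfl
  have h := congrFun (congrArg (star U *ᵥ ·) hψ) j
  simp only [mulVec_mulVec, hUA] at h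
  rw [← mulVec_mulVec, mulVec_diagonal, mulVec_smul, Pi.smul_apply, smul_eq_mul] at h
  have hne : (hA.eigenvalues j : ℂ) - μ ≠ 0 := sub_ne_zero.mpr (by exact_mod_cast hj)
  have hzero : ((hA.eigenvalues j : ℂ) - μ) * (star U *ᵥ ψ) j = 0 := by linear_combination h
  exact (mul_eq_zero.mp hzero).resolve_left hne

lemma spectralWeight_eq_normSq_star_dotProduct {i₀ : n}
    (hsimple : ∀ j ≠ i₀, hA.eigenvalues j ≠ hA.eigenvalues i₀) {ψ : n → ℂ}
    (hψ : A *ᵥ ψ = (hA.eigenvalues i₀ : ℂ) • ψ) (hψu : star ψ ⬝ᵥ ψ = 1) (x : n → ℂ) :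
    hA.spectralWeight x i₀ = Complex.normSq (star ψ ⬝ᵥ x) := by
  set U : Matrix n n ℂ := (hA.eigenvectorUnitary : Matrix n n ℂ)
  have hsupp : ∀ j ≠ i₀, (star U *ᵥ ψ) j = 0 := fun j hj =>
    hA.star_eigenvectorUnitary_mulVec_apply_eq_zero hψ (hsimple j hj)
  have hψi₀ : hA.spectralWeight ψ i₀ = 1 := by
    calc hA.spectralWeight ψ i₀ = ∑ j, hA.spectralWeight ψ j :=
          (Finset.sum_eq_single_of_mem i₀ (Finset.mem_univ _) fun j _ hj => by
            simp [spectralWeight, U, hsupp j hj]).symm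
      _ = 1 := hA.sum_spectralWeight_eq_one hψu
  have hdot : star ψ ⬝ᵥ x = star ((star U *ᵥ ψ) i₀) * (star U *ᵥ x) i₀ := by
    rw [← star_dotProduct_star_unitary_mulVec hA.eigenvectorUnitary]
    exact Finset.sum_eq_single_of_mem i₀ (Finset.mem_univ _) fun j _ hj => by
      simp [U, hsupp j hj]
  rw [hdot, Complex.normSq_mul, Complex.star_def, Complex.normSq_conj,
    show Complex.normSq ((star U *ᵥ ψ) i₀) = 1 from hψi₀, one_mul]
  rfl

lemma re_star_dotProduct_mulVec_le_of_gap {i₀ : n} {Δ : ℝ} (hΔ : 0 < Δ)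
    (hgap : ∀ j ≠ i₀, hA.eigenvalues j ≤ hA.eigenvalues i₀ - Δ) {ψ : n → ℂ}
    (hψ : A *ᵥ ψ = (hA.eigenvalues i₀ : ℂ) • ψ) (hψu : star ψ ⬝ᵥ ψ = 1)
    {x : n → ℂ} (hx : star x ⬝ᵥ x = 1) :
    (star x ⬝ᵥ (A *ᵥ x)).re ≤
      hA.eigenvalues i₀ - Δ * (1 - Complex.normSq (star ψ ⬝ᵥ x)) := by
  have hsimple : ∀ j ≠ i₀, hA.eigenvalues j ≠ hA.eigenvalues i₀ := fun j hj =>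
    ((hgap j hj).trans_lt (sub_lt_self _ hΔ)).ne
  rw [hA.re_star_dotProduct_mulVec, ← hA.spectralWeight_eq_normSq_star_dotProduct hsimple hψ hψu]
  calc ∑ i, hA.eigenvalues i * hA.spectralWeight x i
      ≤ ∑ i, (hA.eigenvalues i₀ - Δ + if i = i₀ then Δ else 0) * hA.spectralWeight x i := by
        refine Finset.sum_le_sum fun i _ =>
          mul_le_mul_of_nonneg_right ?_ (hA.spectralWeight_nonneg x i)
        split_ifs with hi
        · rw [hi]; linarith
        · linarith [hgap i hi]
    _ = (hA.eigenvalues i₀ - Δ) * ∑ i, hA.spectralWeight x i + Δ * hA.spectralWeight x i₀ := by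
        simp [add_mul, Finset.sum_add_distrib, Finset.mul_sum, ite_mul]
    _ = _ := by rw [hA.sum_spectralWeight_eq_one hx]; ring

end IsHermitian

end Matrix

lemma re_star_dotProduct_mulVec_of_mulVec_eq_smul {n : Type*} [Fintype n]
    {A : Matrix n n ℂ} {μ : ℝ} {x : n → ℂ} (hAx : A *ᵥ x = (μ : ℂ) • x)
    (hx : star x ⬝ᵥ x = 1) : (star x ⬝ᵥ (A *ᵥ x)).re = μ := by
  rw [hAx, dotProduct_smul, hx, smul_eq_mul, mul_one, Complex.ofReal_re]

lemma abs_re_star_dotProduct_mulVec_le_traceNorm {d : ℕ} {A : Matrix (Fin d) (Fin d) ℂ}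
    (hA : A.IsHermitian) {x : Fin d → ℂ} (hx : star x ⬝ᵥ x = 1) :
    |(star x ⬝ᵥ (A *ᵥ x)).re| ≤ traceNorm A :=
  traceNorm_eq_sum_abs_eigenvalues hA ▸ hA.abs_re_star_dotProduct_mulVec_le hx

lemma conjTranspose_outer {m n : Type*} (u : m → ℂ) (v : n → ℂ) : (outer u v)ᴴ = outer v u := by
  rw [outer, conjTranspose_vecMulVec, star_star, outer]

section Outer

variable {n : Type*} [Fintype n]

lemma outer_mul_outer (a b c e : n → ℂ) :
    outer a b * outer c e = (star b ⬝ᵥ c) • outer a e := by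
  rw [outer, outer, vecMulVec_mul_vecMulVec, outer, vecMulVec_smul]

lemma trace_outer (u v : n → ℂ) : (outer u v).trace = star v ⬝ᵥ u := by
  rw [outer, trace_vecMulVec, dotProduct_comm]

lemma star_dotProduct_mul_star_dotProduct (u v : n → ℂ) :
    (star u ⬝ᵥ v) * (star v ⬝ᵥ u) = Complex.normSq (star u ⬝ᵥ v) := by
  rw [star_dotProduct v u, Complex.star_def, Complex.mul_conj]

variable {ψ ψ' : n → ℂ}

lemma outer_sub_outer_sq [DecidableEq n] (hψ : star ψ ⬝ᵥ ψ = 1) (hψ' : star ψ' ⬝ᵥ ψ' = 1) :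
    (outer ψ ψ - outer ψ' ψ') ^ 2 =
      outer ψ ψ + outer ψ' ψ' - (star ψ ⬝ᵥ ψ') • outer ψ ψ' - (star ψ' ⬝ᵥ ψ) • outer ψ' ψ := by
  simp only [sq, sub_mul, mul_sub, outer_mul_outer, hψ, hψ', one_smul]
  abel

lemma outer_sub_outer_pow_three [DecidableEq n] (hψ : star ψ ⬝ᵥ ψ = 1)
    (hψ' : star ψ' ⬝ᵥ ψ' = 1) :
    (outer ψ ψ - outer ψ' ψ') ^ 3 =
      (1 - Complex.normSq (star ψ ⬝ᵥ ψ')) • (outer ψ ψ - outer ψ' ψ') := by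
  rw [pow_three', ← sq, outer_sub_outer_sq hψ hψ', ← Complex.coe_smul, Complex.ofReal_sub,
    Complex.ofReal_one, ← star_dotProduct_mul_star_dotProduct]
  simp only [sub_mul, add_mul, mul_sub, smul_mul_assoc, outer_mul_outer, hψ, hψ', one_smul,
    smul_smul, sub_smul, smul_sub]
  module

lemma trace_outer_sub_outer_sq [DecidableEq n] (hψ : star ψ ⬝ᵥ ψ = 1)
    (hψ' : star ψ' ⬝ᵥ ψ' = 1) :
    ((outer ψ ψ - outer ψ' ψ') ^ 2).trace =
      ((2 * (1 - Complex.normSq (star ψ ⬝ᵥ ψ')) : ℝ) : ℂ) := by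
  rw [outer_sub_outer_sq hψ hψ']
  simp only [trace_sub, trace_add, trace_smul, trace_outer, hψ, hψ', smul_eq_mul]
  rw [mul_comm (star ψ' ⬝ᵥ ψ), star_dotProduct_mul_star_dotProduct]
  push_cast
  ring

end Outer

lemma traceNorm_outer_sub_outer {d : ℕ} {ψ ψ' : Fin d → ℂ} (hψ : star ψ ⬝ᵥ ψ = 1)
    (hψ' : star ψ' ⬝ᵥ ψ' = 1) :
    traceNorm (outer ψ ψ - outer ψ' ψ') = 2 * √(1 - Complex.normSq (star ψ ⬝ᵥ ψ')) := by
  have hB : (outer ψ ψ - outer ψ' ψ').IsHermitian := by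
    rw [IsHermitian, conjTranspose_sub, conjTranspose_outer, conjTranspose_outer]
  rw [traceNorm_eq_sum_abs_eigenvalues hB]
  exact hB.sum_abs_eigenvalues_of_pow_three_eq_smul (outer_sub_outer_pow_three hψ hψ')
    (trace_outer_sub_outer_sq hψ hψ')

theorem principal_eigenpair_perturbation_general {d : ℕ} (M M' : Matrix (Fin d) (Fin d) ℂ)
    (hM : M.PosSemidef) (hM' : M'.IsHermitian)
    (Δ ε : ℝ) (hΔ : 0 < Δ)
    (htr : traceNorm (M - M') ≤ ε)
    (lam lam' : ℝ)
    (hmax : ∀ i, hM.1.eigenvalues i ≤ lam)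
    (hatt : ∃ i, hM.1.eigenvalues i = lam)
    (hgap : ∀ i j, i ≠ j → hM.1.eigenvalues i = lam → hM.1.eigenvalues j ≤ lam - Δ)
    (hmax' : ∀ i, hM'.eigenvalues i ≤ lam')
    (ψ ψ' : Fin d → ℂ)
    (hψu : star ψ ⬝ᵥ ψ = 1) (hψ'u : star ψ' ⬝ᵥ ψ' = 1)
    (hψ : M *ᵥ ψ = (lam : ℂ) • ψ) (hψ' : M' *ᵥ ψ' = (lam' : ℂ) • ψ') :
    |lam - lam'| ≤ ε ∧
    traceNorm (outer ψ ψ - outer ψ' ψ') ≤ 2 * Real.sqrt (2 * ε / Δ) := by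
  obtain ⟨i₀, rfl⟩ := hatt
  have hpert : ∀ x : Fin d → ℂ, star x ⬝ᵥ x = 1 →
      |(star x ⬝ᵥ (M *ᵥ x)).re - (star x ⬝ᵥ (M' *ᵥ x)).re| ≤ ε := fun x hx => by
    simpa only [sub_mulVec, dotProduct_sub, Complex.sub_re] using
      (abs_re_star_dotProduct_mulVec_le_traceNorm (hM.1.sub hM') hx).trans htr
  have hψ_pert := abs_le.mp (hpert ψ hψu)
  have hψ'_pert := abs_le.mp (hpert ψ' hψ'u)
  rw [re_star_dotProduct_mulVec_of_mulVec_eq_smul hψ hψu] at hψ_pert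
  rw [re_star_dotProduct_mulVec_of_mulVec_eq_smul hψ' hψ'u] at hψ'_pert
  have hψM' := hM'.re_star_dotProduct_mulVec_le hψu hmax'
  have hψ'M := hM.1.re_star_dotProduct_mulVec_le hψ'u hmax
  have hψ'M_gap := hM.1.re_star_dotProduct_mulVec_le_of_gap hΔ
    (fun j hj => hgap i₀ j hj.symm rfl) hψ hψu hψ'u
  refine ⟨abs_le.mpr ⟨by linarith, by linarith⟩, ?_⟩
  rw [traceNorm_outer_sub_outer hψu hψ'u]
  gcongr
  rw [le_div_iff₀ hΔ]
  linarith

/-- Let `M` be a `d × d` positive semidefinite Hermitian matrix whose largest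
eigenvalue `lam` exceeds its second-largest eigenvalue (with multiplicity) by at least `Δ > 0`
(encoded: every eigenvalue is `≤ lam`, `lam` is attained, and any eigenvalue at an index other
than one attaining `lam` is `≤ lam − Δ`, which in particular forces `lam` to be simple).
Let `M'` be Hermitian with `‖M − M'‖_tr ≤ ε ≤ Δ/2` and largest eigenvalue `lam'`.
Then `|lam − lam'| ≤ ε`; moreover, if `ψ, ψ'` are unit eigenvectors of `M, M'` for `lam, lam'`,
then `‖|ψ⟩⟨ψ| − |ψ'⟩⟨ψ'|‖_tr ≤ 2√(2ε/Δ)`. -/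
theorem principal_eigenpair_perturbation {d : ℕ} (M M' : Matrix (Fin d) (Fin d) ℂ)
    (hM : M.PosSemidef) (hM' : M'.IsHermitian)
    (Δ ε : ℝ) (hΔ : 0 < Δ) (hεΔ : ε ≤ Δ / 2)
    (htr : traceNorm (M - M') ≤ ε)
    (lam lam' : ℝ)
    (hmax : ∀ i, hM.1.eigenvalues i ≤ lam)
    (hatt : ∃ i, hM.1.eigenvalues i = lam)
    (hgap : ∀ i j, i ≠ j → hM.1.eigenvalues i = lam → hM.1.eigenvalues j ≤ lam - Δ)
    (hmax' : ∀ i, hM'.eigenvalues i ≤ lam')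
    (hatt' : ∃ i, hM'.eigenvalues i = lam')
    (ψ ψ' : Fin d → ℂ)
    (hψu : star ψ ⬝ᵥ ψ = 1) (hψ'u : star ψ' ⬝ᵥ ψ' = 1)
    (hψ : M *ᵥ ψ = (lam : ℂ) • ψ) (hψ' : M' *ᵥ ψ' = (lam' : ℂ) • ψ') :
    |lam - lam'| ≤ ε ∧
    traceNorm (outer ψ ψ - outer ψ' ψ') ≤ 2 * Real.sqrt (2 * ε / Δ) :=
  principal_eigenpair_perturbation_general M M' hM hM' Δ ε hΔ htr lam lam' hmax hatt hgap hmax' ψ ψ'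
    hψu hψ'u hψ hψ'
end

section
/- Let |u⟩ and |v⟩ be unit vectors in ℂ^d with a = |⟨u|v⟩|² < 1, and let M = (3/8)|u⟩⟨u| + (1/8)|v⟩⟨v|. Let λ₁ > λ₂ > 0 denote the two nonzero eigenvalues of M (which satisfy λ₁ − λ₂ = √(1/16 + 3a/16) ≥ 1/4), and let |φ₁⟩ be a unit eigenvector of M for λ₁. Then λ₁ ≤ 3/8 + 3a/16, λ₂ ≥ 1/8 − 3a/16, and |⟨u|φ₁⟩|² ≥ 1 − 3a/4. -/
/-!
Writing `x = ⟨u|φ⟩`, `y = ⟨v|φ⟩` and `c = ⟨u|v⟩`, the eigen-equation `Mφ = λφ` projects onto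
`λx = (3/8)x + (1/8)c y`, `λy = (3/8)c̄ x + (1/8)y`, so every nonzero eigenvalue is a root of
`λ² − λ/2 + 3(1 − a)/64`. The two distinct ones therefore have sum `1/2` and product
`3(1 − a)/64`, which determines the gap. For the overlap, `λ₁ = ⟨φ₁|M|φ₁⟩ = (3/8)|x|² + (1/8)|y|²`,
while `(λ₁ − 1/8)y = (3/8)c̄x` together with `λ₁ ≥ 3/8` gives `|y|² ≤ (9a/4)|x|²`; hence
`3/8 ≤ (3/8)(1 + 3a/4)|x|²`.
-/

open Matrix

lemma add_eq_and_mul_eq_of_quadratic {K : Type*} [Field K] {s P x y : K}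
    (hx : x ^ 2 - s * x + P = 0) (hy : y ^ 2 - s * y + P = 0) (hxy : x ≠ y) :
    x + y = s ∧ x * y = P := by
  have hsum : x + y = s := by
    have h : (x - y) * (x + y - s) = 0 := by linear_combination hx - hy
    linear_combination (mul_eq_zero.mp h).resolve_left (sub_ne_zero.mpr hxy)
  exact ⟨hsum, by linear_combination x * hsum - hx⟩

section TwoProjector

variable {n : Type*} [Fintype n]

lemma outer_mulVec_s14 (u v φ : n → ℂ) : outer u v *ᵥ φ = (star v ⬝ᵥ φ) • u := by
  rw [outer, vecMulVec_mulVec, op_smul_eq_smul]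

lemma star_dotProduct_twoProjector_mulVec (p q : ℂ) (u v φ w : n → ℂ) :
    star w ⬝ᵥ ((p • outer u u + q • outer v v) *ᵥ φ) =
      p * (star w ⬝ᵥ u) * (star u ⬝ᵥ φ) + q * (star w ⬝ᵥ v) * (star v ⬝ᵥ φ) := by
  simp only [add_mulVec, smul_mulVec, outer_mulVec_s14, dotProduct_add, dotProduct_smul,
    smul_eq_mul]
  ring

variable {u v φ : n → ℂ} {p q lam : ℝ}

lemma overlaps_of_twoProjector_eigen (hu : star u ⬝ᵥ u = 1) (hv : star v ⬝ᵥ v = 1)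
    (heig : ((p : ℂ) • outer u u + (q : ℂ) • outer v v) *ᵥ φ = (lam : ℂ) • φ) :
    lam * (star u ⬝ᵥ φ) = p * (star u ⬝ᵥ φ) + q * (star u ⬝ᵥ v) * (star v ⬝ᵥ φ) ∧
      lam * (star v ⬝ᵥ φ) = p * star (star u ⬝ᵥ v) * (star u ⬝ᵥ φ) + q * (star v ⬝ᵥ φ) := by
  have hu' := congrArg (star u ⬝ᵥ ·) heig
  have hv' := congrArg (star v ⬝ᵥ ·) heig
  simp only [star_dotProduct_twoProjector_mulVec, dotProduct_smul, smul_eq_mul, hu, hv]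
    at hu' hv'
  rw [star_dotProduct v u] at hv'
  exact ⟨by linear_combination -hu', by linear_combination -hv'⟩

lemma overlap_ne_zero_of_twoProjector_eigen (hlam : lam ≠ 0) (hφ : φ ≠ 0)
    (heig : ((p : ℂ) • outer u u + (q : ℂ) • outer v v) *ᵥ φ = (lam : ℂ) • φ) :
    star u ⬝ᵥ φ ≠ 0 ∨ star v ⬝ᵥ φ ≠ 0 := by
  by_contra! h
  have : (lam : ℂ) • φ = 0 := by
    simp [← heig, add_mulVec, smul_mulVec, outer_mulVec_s14, h.1, h.2]
  exact smul_ne_zero (by exact_mod_cast hlam) hφ this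

lemma eigenvalue_quadratic_of_twoProjector (hu : star u ⬝ᵥ u = 1) (hv : star v ⬝ᵥ v = 1)
    (hlam : lam ≠ 0) (hφ : φ ≠ 0)
    (heig : ((p : ℂ) • outer u u + (q : ℂ) • outer v v) *ᵥ φ = (lam : ℂ) • φ) :
    lam ^ 2 - (p + q) * lam + p * q * (1 - ‖star u ⬝ᵥ v‖ ^ 2) = 0 := by
  obtain ⟨hx, hy⟩ := overlaps_of_twoProjector_eigen hu hv heig
  have hc : star u ⬝ᵥ v * star (star u ⬝ᵥ v) = (‖star u ⬝ᵥ v‖ : ℂ) ^ 2 :=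
    Complex.mul_conj' _
  set x := star u ⬝ᵥ φ
  set y := star v ⬝ᵥ φ
  set c := star u ⬝ᵥ v
  suffices h : ((lam ^ 2 - (p + q) * lam + p * q * (1 - ‖c‖ ^ 2) : ℝ) : ℂ) = 0 by
    exact_mod_cast h
  rcases overlap_ne_zero_of_twoProjector_eigen hlam hφ heig with hx0 | hy0
  · refine (mul_eq_zero.mp ?_).resolve_right hx0
    push_cast
    linear_combination (lam - q : ℂ) * hx + q * c * hy + p * q * x * hc
  · refine (mul_eq_zero.mp ?_).resolve_right hy0
    push_cast
    linear_combination (lam - p : ℂ) * hy + p * star c * hx + p * q * y * hc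

lemma eigenvalue_eq_of_twoProjector_eigen (hφ : star φ ⬝ᵥ φ = 1)
    (heig : ((p : ℂ) • outer u u + (q : ℂ) • outer v v) *ᵥ φ = (lam : ℂ) • φ) :
    lam = p * ‖star u ⬝ᵥ φ‖ ^ 2 + q * ‖star v ⬝ᵥ φ‖ ^ 2 := by
  have h := congrArg (star φ ⬝ᵥ ·) heig
  simp only [star_dotProduct_twoProjector_mulVec, dotProduct_smul, smul_eq_mul, hφ,
    mul_one] at h
  rw [star_dotProduct φ u, star_dotProduct φ v, mul_assoc, mul_assoc, Complex.star_def,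
    Complex.conj_mul', Complex.conj_mul'] at h
  exact_mod_cast h.symm

lemma sq_sub_mul_norm_sq_overlap (hu : star u ⬝ᵥ u = 1) (hv : star v ⬝ᵥ v = 1)
    (heig : ((p : ℂ) • outer u u + (q : ℂ) • outer v v) *ᵥ φ = (lam : ℂ) • φ) :
    (lam - q) ^ 2 * ‖star v ⬝ᵥ φ‖ ^ 2 =
      p ^ 2 * ‖star u ⬝ᵥ v‖ ^ 2 * ‖star u ⬝ᵥ φ‖ ^ 2 := by
  obtain ⟨-, hy⟩ := overlaps_of_twoProjector_eigen hu hv heig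
  have h : ((lam - q : ℝ) : ℂ) * (star v ⬝ᵥ φ) =
      (p : ℂ) * star (star u ⬝ᵥ v) * (star u ⬝ᵥ φ) := by
    push_cast
    linear_combination hy
  have := congrArg (‖·‖ ^ 2) h
  simpa only [norm_mul, mul_pow, Complex.norm_real, Real.norm_eq_abs, sq_abs, norm_star]
    using this

theorem twoProjector_eigenvalues_add_mul {lam₁ lam₂ : ℝ} {φ₁ φ₂ : n → ℂ}
    (hu : star u ⬝ᵥ u = 1) (hv : star v ⬝ᵥ v = 1) (h₁₂ : lam₁ ≠ lam₂)
    (hlam₁ : lam₁ ≠ 0) (hlam₂ : lam₂ ≠ 0) (hφ₁ : φ₁ ≠ 0) (hφ₂ : φ₂ ≠ 0)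
    (heig₁ : ((p : ℂ) • outer u u + (q : ℂ) • outer v v) *ᵥ φ₁ = (lam₁ : ℂ) • φ₁)
    (heig₂ : ((p : ℂ) • outer u u + (q : ℂ) • outer v v) *ᵥ φ₂ = (lam₂ : ℂ) • φ₂) :
    lam₁ + lam₂ = p + q ∧ lam₁ * lam₂ = p * q * (1 - ‖star u ⬝ᵥ v‖ ^ 2) :=
  add_eq_and_mul_eq_of_quadratic (eigenvalue_quadratic_of_twoProjector hu hv hlam₁ hφ₁ heig₁)
    (eigenvalue_quadratic_of_twoProjector hu hv hlam₂ hφ₂ heig₂) h₁₂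

end TwoProjector

lemma one_sub_le_of_rayleigh {lam a X Y : ℝ} (hlam : lam = 3 / 8 * X + 1 / 8 * Y)
    (hoverlap : (lam - 1 / 8) ^ 2 * Y = (3 / 8) ^ 2 * a * X) (hX : 0 ≤ X) (hY : 0 ≤ Y)
    (ha : 0 ≤ a) (hlam38 : 3 / 8 ≤ lam) : 1 - 3 * a / 4 ≤ X := by
  have hYX : Y ≤ 9 * a * X / 4 := by
    nlinarith [mul_nonneg hY (by nlinarith : (0 : ℝ) ≤ (lam - 1 / 8) ^ 2 - 1 / 16)]
  nlinarith [mul_nonneg ha hX, sq_nonneg a]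

theorem two_state_principal_component_general {d : ℕ} (u v : Fin d → ℂ)
    (hu : star u ⬝ᵥ u = 1) (hv : star v ⬝ᵥ v = 1)
    (a : ℝ) (ha : a = ‖star u ⬝ᵥ v‖ ^ 2)
    (lam1 lam2 : ℝ) (hord : lam2 < lam1) (h2pos : 0 < lam2)
    (φ1 : Fin d → ℂ) (hφ1 : star φ1 ⬝ᵥ φ1 = 1)
    (heig1 : ((3 / 8 : ℂ) • outer u u + (1 / 8 : ℂ) • outer v v) *ᵥ φ1 = (lam1 : ℂ) • φ1)
    (w : Fin d → ℂ) (hw : w ≠ 0)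
    (heig2 : ((3 / 8 : ℂ) • outer u u + (1 / 8 : ℂ) • outer v v) *ᵥ w = (lam2 : ℂ) • w) :
    lam1 - lam2 = Real.sqrt (1 / 16 + 3 * a / 16) ∧
    1 / 4 ≤ lam1 - lam2 ∧
    lam1 ≤ 3 / 8 + 3 * a / 16 ∧
    1 / 8 - 3 * a / 16 ≤ lam2 ∧
    1 - 3 * a / 4 ≤ ‖star u ⬝ᵥ φ1‖ ^ 2 := by
  have hM : (3 / 8 : ℂ) • outer u u + (1 / 8 : ℂ) • outer v v =
      ((3 / 8 : ℝ) : ℂ) • outer u u + ((1 / 8 : ℝ) : ℂ) • outer v v := by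
    push_cast; rfl
  rw [hM] at heig1 heig2
  have ha0 : 0 ≤ a := ha ▸ sq_nonneg _
  have hφ1_ne : φ1 ≠ 0 := by rintro rfl; simp at hφ1
  obtain ⟨hsum, hprod⟩ := twoProjector_eigenvalues_add_mul hu hv hord.ne' (by linarith)
    h2pos.ne' hφ1_ne hw heig1 heig2
  have hsq : (lam1 - lam2) ^ 2 = 1 / 16 + 3 * a / 16 := by
    rw [ha]; linear_combination (lam1 + lam2 + 1 / 2) * hsum - 4 * hprod
  have hgap : lam1 - lam2 = √(1 / 16 + 3 * a / 16) := by
    rw [← hsq, Real.sqrt_sq (by linarith)]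
  have hgap_ge : 1 / 4 ≤ lam1 - lam2 := by nlinarith
  have hgap_le : lam1 - lam2 ≤ 1 / 4 + 3 * a / 8 := by nlinarith [sq_nonneg a]
  refine ⟨hgap, hgap_ge, by linarith, by linarith, ?_⟩
  have hoverlap := sq_sub_mul_norm_sq_overlap hu hv heig1
  rw [← ha] at hoverlap
  exact one_sub_le_of_rayleigh (eigenvalue_eq_of_twoProjector_eigen hφ1 heig1) hoverlap
    (sq_nonneg _) (sq_nonneg _) ha0 (by linarith)

/-- Let `u, v` be unit vectors in `ℂ^d` with `a = |⟨u|v⟩|² < 1`, and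
`M = (3/8)|u⟩⟨u| + (1/8)|v⟩⟨v|`.  Let `λ₁ > λ₂ > 0` be the two nonzero eigenvalues of `M`
(with `φ₁` a unit eigenvector for `λ₁` and `w ≠ 0` an eigenvector for `λ₂`).  Then
`λ₁ − λ₂ = √(1/16 + 3a/16) ≥ 1/4`, `λ₁ ≤ 3/8 + 3a/16`, `λ₂ ≥ 1/8 − 3a/16`, and
`|⟨u|φ₁⟩|² ≥ 1 − 3a/4`. -/
theorem two_state_principal_component {d : ℕ} (u v : Fin d → ℂ)
    (hu : star u ⬝ᵥ u = 1) (hv : star v ⬝ᵥ v = 1)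
    (a : ℝ) (ha : a = ‖star u ⬝ᵥ v‖ ^ 2) (ha1 : a < 1)
    (lam1 lam2 : ℝ) (hord : lam2 < lam1) (h2pos : 0 < lam2)
    (φ1 : Fin d → ℂ) (hφ1 : star φ1 ⬝ᵥ φ1 = 1)
    (heig1 : ((3 / 8 : ℂ) • outer u u + (1 / 8 : ℂ) • outer v v) *ᵥ φ1 = (lam1 : ℂ) • φ1)
    (w : Fin d → ℂ) (hw : w ≠ 0)
    (heig2 : ((3 / 8 : ℂ) • outer u u + (1 / 8 : ℂ) • outer v v) *ᵥ w = (lam2 : ℂ) • w) :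
    lam1 - lam2 = Real.sqrt (1 / 16 + 3 * a / 16) ∧
    1 / 4 ≤ lam1 - lam2 ∧
    lam1 ≤ 3 / 8 + 3 * a / 16 ∧
    1 / 8 - 3 * a / 16 ≤ lam2 ∧
    1 - 3 * a / 4 ≤ ‖star u ⬝ᵥ φ1‖ ^ 2 :=
  two_state_principal_component_general u v hu hv a ha lam1 lam2 hord h2pos φ1 hφ1 heig1 w hw heig2
end

section
/- Let V be a d_A d_B × d_A matrix with V†V = I_{d_A} (an isometry from ℂ^{d_A} to ℂ^{d_A}⊗ℂ^{d_B}), and define the channel 𝓔(ρ) = Tr_B(V ρ V†) for d_A×d_A matrices ρ. Let ρ_𝓔 = (1/d_A) Σ_{k,l} |k⟩⟨l| ⊗ 𝓔(|k⟩⟨l|) be the (normalized) Choi state of 𝓔 on ℂ^{d_A}⊗ℂ^{d_A}, where (|k⟩) is the standard basis of ℂ^{d_A}. Then the unitarity of 𝓔 satisfies Tr(ρ_𝓔²) = Tr[ (Tr_A(V (I_{d_A}/d_A) V†))² ], i.e., the purity of the Choi state equals the purity of the environment output state on the maximally mixed input. -/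
open Matrix Kronecker

/-- Partial trace over the second (B) tensor factor. -/
noncomputable def ptraceB {dA dB : ℕ}
    (M : Matrix (Fin dA × Fin dB) (Fin dA × Fin dB) ℂ) : Matrix (Fin dA) (Fin dA) ℂ :=
  Matrix.of fun i i' => ∑ k : Fin dB, M (i, k) (i', k)

/-- Partial trace over the first (A) tensor factor. -/
noncomputable def ptraceA {dA dB : ℕ}
    (M : Matrix (Fin dA × Fin dB) (Fin dA × Fin dB) ℂ) : Matrix (Fin dB) (Fin dB) ℂ :=
  Matrix.of fun k k' => ∑ i : Fin dA, M (i, k) (i, k')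

/-! Reshaping `V` into `W := choiFactor V`, `W (k, i) b = V (i, b) k`, the Choi state is
`W Wᴴ / dA` and the environment state on the maximally mixed input is `(Wᴴ W)ᵀ / dA`. The two
Gram matrices of `W` have the same purity by cyclicity of the trace. -/

namespace Matrix

variable {m n R : Type*} [Fintype m] [Fintype n] [CommSemiring R]

theorem trace_mul_sq_comm [DecidableEq m] [DecidableEq n] (A : Matrix m n R)
    (B : Matrix n m R) : ((A * B) ^ 2).trace = ((B * A) ^ 2).trace := by
  rw [sq, sq, Matrix.mul_assoc, trace_mul_comm A]
  simp only [Matrix.mul_assoc]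

theorem trace_transpose_sq [DecidableEq n] (M : Matrix n n R) :
    ((Mᵀ) ^ 2).trace = (M ^ 2).trace := by
  rw [← transpose_pow, trace_transpose]

end Matrix

def choiFactor {k m n α : Type*} (V : Matrix (m × n) k α) : Matrix (k × m) n α :=
  of fun p b => V (p.2, b) p.1

variable {dA dB : ℕ} (V : Matrix (Fin dA × Fin dB) (Fin dA) ℂ)

theorem ptraceB_mul_single_mul_conjTranspose_apply (k l i i' : Fin dA) :
    ptraceB (V * single k l (1 : ℂ) * Vᴴ) i i' = ∑ b, V (i, b) k * star (V (i', b) l) := by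
  simp [ptraceB, mul_apply, single, Finset.sum_ite_eq, ite_and]

theorem sum_single_kronecker_ptraceB :
    ∑ k : Fin dA, ∑ l : Fin dA,
        single k l (1 : ℂ) ⊗ₖ ptraceB (V * single k l (1 : ℂ) * Vᴴ) =
      choiFactor V * (choiFactor V)ᴴ := by
  ext ⟨a, i⟩ ⟨a', i'⟩
  simp only [Matrix.sum_apply, kroneckerMap_apply, single_apply, ite_and, ite_mul, one_mul,
    zero_mul]
  simp [ptraceB_mul_single_mul_conjTranspose_apply, choiFactor, mul_apply]

theorem ptraceA_mul_smul_one_mul_conjTranspose (c : ℂ) :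
    ptraceA (V * (c • (1 : Matrix (Fin dA) (Fin dA) ℂ)) * Vᴴ) =
      c • ((choiFactor V)ᴴ * choiFactor V)ᵀ := by
  rw [Matrix.mul_smul, Matrix.mul_one, Matrix.smul_mul]
  ext b b'
  simp only [ptraceA, of_apply, Matrix.smul_apply, transpose_apply, mul_apply,
    conjTranspose_apply, choiFactor, Fintype.sum_prod_type, smul_eq_mul]
  simp_rw [Finset.mul_sum, mul_comm (star _)]
  exact Finset.sum_comm

theorem unitarity_eq_env_purity_general {dA dB : ℕ}
    (V : Matrix (Fin dA × Fin dB) (Fin dA) ℂ) :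
    ((((dA : ℂ))⁻¹ • ∑ k : Fin dA, ∑ l : Fin dA,
          Matrix.single k l (1 : ℂ) ⊗ₖ
            ptraceB (V * Matrix.single k l (1 : ℂ) * Vᴴ)) ^ 2).trace =
      ((ptraceA (V * ((dA : ℂ)⁻¹ • (1 : Matrix (Fin dA) (Fin dA) ℂ)) * Vᴴ)) ^ 2).trace := by
  rw [sum_single_kronecker_ptraceB, ptraceA_mul_smul_one_mul_conjTranspose, smul_pow, smul_pow,
    trace_smul, trace_smul, trace_transpose_sq, trace_mul_sq_comm]

/-- Let `V : ℂ^{dA} → ℂ^{dA} ⊗ ℂ^{dB}` be an isometry (`V† V = I`), defining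
the channel `𝓔(ρ) = Tr_B(V ρ V†)`, and let
`ρ_𝓔 = (1/dA) Σ_{k,l} |k⟩⟨l| ⊗ 𝓔(|k⟩⟨l|)` be its normalized Choi state.  Then the unitarity
`Tr(ρ_𝓔²)` equals `Tr[(Tr_A(V (I/dA) V†))²]`, the purity of the environment output state on
the maximally mixed input. -/
theorem unitarity_eq_env_purity {dA dB : ℕ}
    (V : Matrix (Fin dA × Fin dB) (Fin dA) ℂ) (hV : Vᴴ * V = 1) :
    ((((dA : ℂ))⁻¹ • ∑ k : Fin dA, ∑ l : Fin dA,
          Matrix.single k l (1 : ℂ) ⊗ₖ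
            ptraceB (V * Matrix.single k l (1 : ℂ) * Vᴴ)) ^ 2).trace =
      ((ptraceA (V * ((dA : ℂ)⁻¹ • (1 : Matrix (Fin dA) (Fin dA) ℂ)) * Vᴴ)) ^ 2).trace :=
  unitarity_eq_env_purity_general V
end
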